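/- arXiv:1005.1311 — 5 statements merged into one kernel-verified Lean document; each statement's English description precedes it below -/
import Mathlib

section
/- Let $0 < p < 1$, $c > 0$, $k \geq 0$ and $m > 0$ be real numbers. Let $T = \frac{c}{2}\left(p^{k+1} + p^{k+m+1}\right)$ be the target guess when a $k$-player (guessing $c p^k$) and a $(k+m)$-player (guessing $c p^{k+m}$) play head to head. Then the $(k+m)$-player's guess is strictly closer to the target: $|c p^{k+m} - T| < |c p^k - T|$. -/
theorem abs_sub_lt_abs_sub_of_lt_midpoint {α : Type*} [Field α] [LinearOrder α]
    [IsStrictOrderedRing α] {x y t : α} (hxy : x < y) (ht : t < (x + y) / 2) :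
    |x - t| < |y - t| := by
  rw [abs_of_pos (by linarith : 0 < y - t), abs_lt]
  constructor <;> linarith

theorem beauty_head_to_head_general (p c k m : ℝ) (hp0 : 0 < p) (hp1 : p < 1)
    (hc : 0 < c) (hm : 0 < m) :
    |c * p ^ (k + m) - c / 2 * (p ^ (k + 1) + p ^ (k + m + 1))| <
      |c * p ^ k - c / 2 * (p ^ (k + 1) + p ^ (k + m + 1))| := by
  have hguess : c * p ^ (k + m) < c * p ^ k :=
    mul_lt_mul_of_pos_left (Real.rpow_lt_rpow_of_exponent_gt hp0 hp1 (by linarith)) hc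
  -- The target is `p` times the midpoint of the two guesses, hence lies below that midpoint.
  have htarget : c / 2 * (p ^ (k + 1) + p ^ (k + m + 1)) =
      p * ((c * p ^ (k + m) + c * p ^ k) / 2) := by
    rw [Real.rpow_add_one hp0.ne', Real.rpow_add_one hp0.ne']
    ring
  refine abs_sub_lt_abs_sub_of_lt_midpoint hguess ?_
  rw [htarget]
  exact mul_lt_of_lt_one_left (by positivity) hp1

/-- In the two-player p-beauty game, with target
`T = c/2 * (p^(k+1) + p^(k+m+1))`, the `(k+m)`-player's guess `c * p^(k+m)`
is strictly closer to the target than the `k`-player's guess `c * p^k`. -/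
theorem beauty_head_to_head (p c k m : ℝ) (hp0 : 0 < p) (hp1 : p < 1)
    (hc : 0 < c) (hk : 0 ≤ k) (hm : 0 < m) :
    |c * p ^ (k + m) - c / 2 * (p ^ (k + 1) + p ^ (k + m + 1))| <
      |c * p ^ k - c / 2 * (p ^ (k + 1) + p ^ (k + m + 1))| :=
  beauty_head_to_head_general p c k m hp0 hp1 hc hm
end

section
/- Let $0 < p < 1$, $c > 0$, $k \geq 0$ and $m > 0$ be real numbers. In the infinite population limit, where the target guess is $T = c\, p^{k+1}$, the $(k+m)$-player's guess $c p^{k+m}$ is strictly closer to $T$ than the $k$-player's guess $c p^k$ if and only if $1 - 2p + p^m > 0$. -/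
/-! Both guesses are `c p^k` times `p^m` and `1` respectively, while the target is `c p^k` times `p`.
After cancelling the positive factor `c p^k`, the comparison is `|p^m - p| < 1 - p`; since `p^m < 1`
the upper half of this is automatic and the lower half reads `1 - 2p + p^m > 0`. -/

lemma abs_sub_lt_one_sub_iff {p q : ℝ} (hq : q < 1) :
    |q - p| < 1 - p ↔ 0 < 1 - 2 * p + q := by
  rw [abs_lt]
  constructor
  · rintro ⟨hlow, -⟩
    linarith
  · intro h
    constructor <;> linarith

theorem beauty_infinite_population_iff_general (p c k m : ℝ) (hp0 : 0 < p) (hp1 : p < 1)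
    (hc : 0 < c) (hm : 0 < m) :
    |c * p ^ (k + m) - c * p ^ (k + 1)| < |c * p ^ k - c * p ^ (k + 1)| ↔
      0 < 1 - 2 * p + p ^ m := by
  have hscale : 0 < c * p ^ k := mul_pos hc (Real.rpow_pos_of_pos hp0 k)
  have hnew : c * p ^ (k + m) - c * p ^ (k + 1) = c * p ^ k * (p ^ m - p) := by
    rw [Real.rpow_add hp0, Real.rpow_add hp0, Real.rpow_one]
    ring
  have hold : c * p ^ k - c * p ^ (k + 1) = c * p ^ k * (1 - p) := by
    rw [Real.rpow_add hp0, Real.rpow_one]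
    ring
  rw [hnew, hold, abs_mul (c * p ^ k), abs_mul (c * p ^ k), abs_of_pos hscale,
    mul_lt_mul_iff_right₀ hscale, abs_of_pos (sub_pos.mpr hp1)]
  exact abs_sub_lt_one_sub_iff (Real.rpow_lt_one hp0.le hp1 hm)

/-- In the infinite population limit with target `T = c * p^(k+1)`, the
`(k+m)`-player's guess is strictly closer to the target than the `k`-player's
guess if and only if `1 - 2p + p^m > 0`. -/
theorem beauty_infinite_population_iff (p c k m : ℝ) (hp0 : 0 < p) (hp1 : p < 1)
    (hc : 0 < c) (hk : 0 ≤ k) (hm : 0 < m) :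
    |c * p ^ (k + m) - c * p ^ (k + 1)| < |c * p ^ k - c * p ^ (k + 1)| ↔
      0 < 1 - 2 * p + p ^ m :=
  beauty_infinite_population_iff_general p c k m hp0 hp1 hc hm
end

section
/- Let $m > 2$ be real and let $\phi(p) = 1 - 2p + p^m$ for $p \in (0,1)$. Then there exists a unique $p^* \in (1/2, 1)$ such that $\phi(p^*) = 0$. -/
/-!
`φ(p) = 1 - 2p + p^m` is strictly convex on `[0, ∞)` and vanishes at `1`, so it has at most one
further zero there. Since `φ(1/2) = 2^{-m} > 0` while `φ'(1) = m - 2 > 0` makes `φ` negative just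
to the left of `1`, the intermediate value theorem places that zero in `(1/2, 1)`.
-/

open Set Filter Topology

noncomputable def phi (m p : ℝ) : ℝ := 1 - 2 * p + p ^ m

theorem StrictConvexOn.eq_of_apply_eq_of_lt {s : Set ℝ} {f : ℝ → ℝ}
    (hf : StrictConvexOn ℝ s f) {x y z : ℝ} (hx : x ∈ s) (hy : y ∈ s) (hz : z ∈ s)
    (hxz : x < z) (hyz : y < z) (hfx : f x = f z) (hfy : f y = f z) : x = y := by
  wlog hxy : x < y generalizing x y
  · rcases (not_lt.1 hxy).lt_or_eq with h | h
    · exact (this hy hx hyz hxz hfy hfx h).symm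
    · exact h.symm
  have hmem : y ∈ openSegment ℝ x z := by rw [openSegment_eq_Ioo hxz]; exact ⟨hxy, hyz⟩
  have := hf.lt_on_openSegment hx hz hxz.ne hmem
  rw [hfx, hfy, max_self] at this
  exact (lt_irrefl _ this).elim

theorem HasDerivAt.eventually_nhdsLT_lt {f : ℝ → ℝ} {f' x : ℝ} (hf : HasDerivAt f f' x)
    (hf' : 0 < f') : ∀ᶠ y in 𝓝[<] x, f y < f x := by
  have hslope : ∀ᶠ y in 𝓝[<] x, 0 < slope f x y :=
    (hasDerivAt_iff_tendsto_slope_left_right.1 hf).1.eventually (eventually_gt_nhds hf')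
  filter_upwards [hslope, self_mem_nhdsWithin] with y hy (hyx : y < x)
  rw [slope_comm, slope_def_field, div_pos_iff_of_pos_right (sub_pos.2 hyx)] at hy
  linarith

theorem strictConvexOn_phi {m : ℝ} (hm : 1 < m) : StrictConvexOn ℝ (Ici 0) (phi m) := by
  have haffine : ConvexOn ℝ (Ici 0) fun p : ℝ => 1 - 2 * p := by
    refine ⟨convex_Ici 0, fun x _ y _ a b _ _ hab => le_of_eq ?_⟩
    simp only [smul_eq_mul]
    linear_combination -hab
  exact haffine.add_strictConvexOn (strictConvexOn_rpow hm)

theorem phi_one (m : ℝ) : phi m 1 = 0 := by norm_num [phi]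

theorem phi_half_pos (m : ℝ) : 0 < phi m (1 / 2) := by
  have := Real.rpow_pos_of_pos (one_half_pos (α := ℝ)) m
  simp only [phi]; linarith

theorem hasDerivAt_phi_one (m : ℝ) : HasDerivAt (phi m) (m - 2) 1 := by
  have h : HasDerivAt (phi m) (-(2 * 1) + m * 1 ^ (m - 1)) 1 :=
    (((hasDerivAt_id 1).const_mul 2).const_sub 1).add
      (Real.hasDerivAt_rpow_const (Or.inl one_ne_zero))
  rwa [Real.one_rpow, mul_one, mul_one, neg_add_eq_sub] at h

theorem continuousOn_phi (m : ℝ) : ContinuousOn (phi m) (Ioi 0) := by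
  intro p hp
  exact ((continuousAt_const.sub (continuousAt_const.mul continuousAt_id)).add
      (Real.continuousAt_rpow_const p m (Or.inl (ne_of_gt hp)))).continuousWithinAt

theorem exists_phi_neg {m : ℝ} (hm : 2 < m) : ∃ x ∈ Ioo (1 / 2 : ℝ) 1, phi m x < 0 := by
  have hneg := (hasDerivAt_phi_one m).eventually_nhdsLT_lt (sub_pos.2 hm)
  rw [phi_one] at hneg
  exact (hneg.and (Ioo_mem_nhdsLT (by norm_num))).exists.imp fun x hx => ⟨hx.2, hx.1⟩

theorem eq_of_phi_eq_zero {m p q : ℝ} (hm : 1 < m) (hp : p ∈ Ico 0 1) (hq : q ∈ Ico 0 1)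
    (hfp : phi m p = 0) (hfq : phi m q = 0) : p = q :=
  (strictConvexOn_phi hm).eq_of_apply_eq_of_lt hp.1 hq.1 (mem_Ici.2 zero_le_one) hp.2 hq.2
    (hfp.trans (phi_one m).symm) (hfq.trans (phi_one m).symm)

/-- For real `m > 2`, `φ(p) = 1 - 2p + p^m` has a unique root in `(1/2, 1)`. -/
theorem phi_unique_root (m : ℝ) (hm : 2 < m) :
    ∃! p : ℝ, p ∈ Set.Ioo (1 / 2 : ℝ) 1 ∧ 1 - 2 * p + p ^ m = 0 := by
  obtain ⟨x, hx, hfx⟩ := exists_phi_neg hm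
  have hcont : ContinuousOn (phi m) (Icc (1 / 2) x) :=
    (continuousOn_phi m).mono fun p hp => one_half_pos.trans_le hp.1
  obtain ⟨p, hp, hfp⟩ := intermediate_value_Ioo' hx.1.le hcont ⟨hfx, phi_half_pos m⟩
  have hp' : p ∈ Ioo (1 / 2 : ℝ) 1 := ⟨hp.1, hp.2.trans hx.2⟩
  have hIco : Ioo (1 / 2 : ℝ) 1 ⊆ Ico 0 1 := fun r hr => ⟨by linarith [hr.1], hr.2⟩
  exact ⟨p, ⟨hp', hfp⟩, fun q ⟨hq, hfq⟩ =>
    eq_of_phi_eq_zero (by linarith) (hIco hq) (hIco hp') hfq hfp⟩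
end

section
/- Let $m > 2$ be real and set $p_{min} = (2/m)^{1/(m-1)}$. Then $\phi(p_{min}) = 1 - 2 p_{min} + p_{min}^m < 0$. -/
/-!
`φ` is strictly convex with its critical point at `p_min ≠ 1`, so `φ(p_min) < φ(1) = 0`.
Concretely: the tangent line of the strictly convex `t ↦ t ^ m` at `p_min` lies strictly below its
chord to `1`, and since `m * p_min ^ (m - 1) = 2` this inequality is `1 - 2 p_min + p_min ^ m < 0`.
-/

theorem mul_rpow_sub_one_mul_sub_lt_sub_rpow {m x y : ℝ} (hm : 1 < m) (hx : 0 ≤ x) (hxy : x < y) :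
    m * x ^ (m - 1) * (y - x) < y ^ m - x ^ m := by
  have hslope : m * x ^ (m - 1) < slope (fun t : ℝ ↦ t ^ m) x y :=
    (strictConvexOn_rpow hm).lt_slope_of_hasDerivAt (Set.mem_Ici.2 hx)
      (Set.mem_Ici.2 (hx.trans hxy.le)) hxy (Real.hasDerivAt_rpow_const (Or.inr hm.le))
  rwa [slope_def_field, lt_div_iff₀ (sub_pos.2 hxy)] at hslope

/-- For real `m > 2`, the value of `φ` at its critical point
`p_min = (2/m)^(1/(m-1))` is negative. -/
theorem phi_at_p_min_neg (m : ℝ) (hm : 2 < m) :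
    1 - 2 * ((2 / m) ^ (1 / (m - 1)) : ℝ) + ((2 / m) ^ (1 / (m - 1)) : ℝ) ^ m < 0 := by
  set p : ℝ := (2 / m) ^ (1 / (m - 1)) with hp
  have hcrit : p ^ (m - 1) = 2 / m := by
    rw [hp, one_div, Real.rpow_inv_rpow (by positivity) (by linarith)]
  have hp_lt_one : p < 1 :=
    Real.rpow_lt_one (by positivity) ((div_lt_one (by linarith)).2 hm)
      (one_div_pos.2 (by linarith))
  have htangent :=
    mul_rpow_sub_one_mul_sub_lt_sub_rpow (by linarith : (1 : ℝ) < m) (by positivity) hp_lt_one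
  rw [hcrit, Real.one_rpow, mul_div_cancel₀ _ (by positivity)] at htangent
  linarith
end

section
/- Let $N \geq 2$ be a real number. Then there exists $M > 0$ such that for every real $m \geq M$, the function $\phi_N(p) = 1 - 2p\,\frac{N + p^m}{N+1} + p^m$ has a root $p^*$ in the interval $(1/2, 1)$. -/
/-!
At `p = 1/2` one has `φ_N(p) = (1 + N 2⁻ᵐ)/(N + 1) > 0` for every `m`. For a fixed
`p ∈ (0, 1)` the term `p ^ m` vanishes as `m → ∞`, so `φ_N(p) → 1 - 2pN/(N + 1)`, which is
negative as soon as `p > (N + 1)/(2N)`; for `N ≥ 2` the point `p = 9/10` qualifies. Hence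
`φ_N(9/10) < 0` for all large `m`, and the intermediate value theorem gives a root in
`(1/2, 9/10)`.
-/

open Filter Topology Set

noncomputable section

def phiN (N m p : ℝ) : ℝ := 1 - 2 * p * ((N + p ^ m) / (N + 1)) + p ^ m

theorem phiN_half_pos {N : ℝ} (hN : 0 ≤ N) (m : ℝ) : 0 < phiN N m (1 / 2) := by
  have hpow : 0 < (1 / 2 : ℝ) ^ m := Real.rpow_pos_of_pos (by norm_num) m
  have hclosed : phiN N m (1 / 2) = (1 + N * (1 / 2 : ℝ) ^ m) / (N + 1) := by
    unfold phiN
    field_simp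
    ring
  rw [hclosed]
  positivity

theorem tendsto_phiN_atTop (N : ℝ) {p : ℝ} (hp₀ : 0 ≤ p) (hp₁ : p < 1) :
    Tendsto (fun m => phiN N m p) atTop (𝓝 (1 - 2 * p * (N / (N + 1)))) := by
  have hpow : Tendsto (p ^ · : ℝ → ℝ) atTop (𝓝 0) :=
    tendsto_rpow_atTop_of_base_lt_one p (by linarith) hp₁
  have hcont : Continuous fun x : ℝ => 1 - 2 * p * ((N + x) / (N + 1)) + x := by fun_prop
  simpa [phiN, Function.comp_def] using (hcont.tendsto 0).comp hpow

theorem eventually_phiN_neg {N p : ℝ} (hN : 0 ≤ N) (hp₀ : 0 ≤ p) (hp₁ : p < 1)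
    (hlarge : N + 1 < 2 * p * N) : ∀ᶠ m in atTop, phiN N m p < 0 := by
  have hlimit : 1 - 2 * p * (N / (N + 1)) < 0 := by
    rw [mul_div_assoc', sub_neg, one_lt_div (by linarith)]
    linarith
  exact (tendsto_phiN_atTop N hp₀ hp₁).eventually (gt_mem_nhds hlimit)

theorem exists_phiN_eq_zero {N m q : ℝ} (hN : 0 ≤ N) (hq : 1 / 2 < q) (hneg : phiN N m q < 0) :
    ∃ p ∈ Ioo (1 / 2) q, phiN N m p = 0 := by
  have hcont : ContinuousOn (phiN N m) (Icc (1 / 2) q) := by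
    have hpow : ContinuousOn (· ^ m : ℝ → ℝ) (Icc (1 / 2) q) :=
      continuousOn_id.rpow_const fun x hx => Or.inl (one_half_pos.trans_le hx.1).ne'
    unfold phiN
    fun_prop
  exact intermediate_value_Ioo' hq.le hcont ⟨hneg, phiN_half_pos hN m⟩

/-- For real `N ≥ 2`, there is `M > 0` such that for every `m ≥ M`, the
function `φ_N(p) = 1 - 2p(N + p^m)/(N+1) + p^m` has a root in `(1/2, 1)`. -/
theorem phiN_root_exists_large_m (N : ℝ) (hN : 2 ≤ N) :
    ∃ M : ℝ, 0 < M ∧ ∀ m : ℝ, M ≤ m →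
      ∃ pstar ∈ Set.Ioo (1 / 2 : ℝ) 1,
        1 - 2 * pstar * ((N + pstar ^ m) / (N + 1)) + pstar ^ m = 0 := by
  obtain ⟨M, hM⟩ := eventually_atTop.1 <|
    eventually_phiN_neg (p := 9 / 10) (by linarith) (by norm_num) (by norm_num) (by linarith)
  refine ⟨max M 1, by positivity, fun m hm => ?_⟩
  obtain ⟨p, hp, hroot⟩ :=
    exists_phiN_eq_zero (by linarith) (by norm_num) (hM m (le_of_max_le_left hm))
  exact ⟨p, ⟨hp.1, hp.2.trans (by norm_num)⟩, hroot⟩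

end
end
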